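/- Let G be a simple graph on a vertex set V in which every vertex has positive degree, and in which every vertex degree is at most Λ for a fixed real Λ ≥ 1; let 𝓛 be the normalized Laplacian. Suppose S ⊆ V (finite or infinite) is such that for every v ∈ S there exists a vertex u_v ∉ S adjacent to v whose set of neighbors intersects S exactly in {v}. Then S is a Λ-set: for every φ : V → ℂ supported in S with ∑_{v∈V}|φ(v)|² and ∑_{v∈V}|(𝓛φ)(v)|² finite, one has (∑_{v∈V}|φ(v)|²)^{1/2} ≤ Λ·(∑_{v∈V}|(𝓛φ)(v)|²)^{1/2}. -/

import Mathlib

/-!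
At a private neighbour `u` of `v ∈ S` the Laplacian of `φ` sees only `φ v`:
`(𝓛 φ) u = -φ v / √(d v · d u)`, so `‖φ v‖ ≤ Λ ‖(𝓛 φ) u‖`. Distinct vertices of `S` have distinct
private neighbours, so summing squares bounds `‖φ‖²` by `Λ² ‖𝓛 φ‖²`.
-/

/-- The normalized Laplacian of a locally finite simple graph, acting on `f : V → ℂ`:
`(𝓛 f) v = f v − ∑_{u ∼ v} f u / √(d u · d v)`. -/
noncomputable def nLap {V : Type*} (G : SimpleGraph V) [G.LocallyFinite] (f : V → ℂ) (v : V) : ℂ :=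
  f v - ∑ u ∈ G.neighborFinset v, f u / (Real.sqrt ((G.degree u : ℝ) * (G.degree v : ℝ)) : ℂ)

open Function

theorem sqrt_tsum_sq_le_of_injective {α β E F : Type*} [SeminormedAddCommGroup E]
    [SeminormedAddCommGroup F] {S : Set α} {f : α → E} (hf : ∀ a ∉ S, f a = 0) {g : β → F}
    (hg : Summable fun b => ‖g b‖ ^ 2) {e : S → β} (he : Injective e) {c : ℝ} (hc : 0 ≤ c)
    (hfg : ∀ a : S, ‖f a‖ ≤ c * ‖g (e a)‖) :
    √(∑' a, ‖f a‖ ^ 2) ≤ c * √(∑' b, ‖g b‖ ^ 2) := by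
  have hsq : ∀ a : S, ‖f a‖ ^ 2 ≤ c ^ 2 * ‖g (e a)‖ ^ 2 := fun a => by
    rw [← mul_pow]; exact pow_le_pow_left₀ (norm_nonneg _) (hfg a) 2
  have hge : Summable fun a : S => c ^ 2 * ‖g (e a)‖ ^ 2 := (hg.comp_injective he).mul_left _
  have hsupp : support (fun a => ‖f a‖ ^ 2) ⊆ S := fun a ha => by
    by_contra h; simp [hf a h] at ha
  have hsum : ∑' a, ‖f a‖ ^ 2 ≤ c ^ 2 * ∑' b, ‖g b‖ ^ 2 := calc
    ∑' a, ‖f a‖ ^ 2 = ∑' a : S, ‖f a‖ ^ 2 := (tsum_subtype_eq_of_support_subset hsupp).symm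
    _ ≤ ∑' a : S, c ^ 2 * ‖g (e a)‖ ^ 2 :=
      (hge.of_nonneg_of_le (fun _ => by positivity) hsq).tsum_le_tsum hsq hge
    _ = c ^ 2 * ∑' a : S, ‖g (e a)‖ ^ 2 := tsum_mul_left
    _ ≤ c ^ 2 * ∑' b, ‖g b‖ ^ 2 := by
      gcongr; exact tsum_comp_le_tsum_of_inj hg (fun _ => by positivity) he
  calc √(∑' a, ‖f a‖ ^ 2) ≤ √(c ^ 2 * ∑' b, ‖g b‖ ^ 2) := Real.sqrt_le_sqrt hsum
    _ = c * √(∑' b, ‖g b‖ ^ 2) := by rw [Real.sqrt_mul (by positivity), Real.sqrt_sq hc]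

namespace SimpleGraph

variable {V : Type*} {G : SimpleGraph V} [G.LocallyFinite]

theorem nLap_eq_of_adj_of_eq_zero {f : V → ℂ} {u v : V} (huv : G.Adj u v) (hu : f u = 0)
    (hf : ∀ w, G.Adj u w → w ≠ v → f w = 0) :
    nLap G f u = -(f v / (√((G.degree v : ℝ) * G.degree u) : ℂ)) := by
  rw [nLap, hu, Finset.sum_eq_single_of_mem v ((G.mem_neighborFinset u v).2 huv)
    fun w hw hwv => by rw [hf w ((G.mem_neighborFinset u w).1 hw) hwv, zero_div], zero_sub]

theorem norm_eq_sqrt_mul_norm_nLap {f : V → ℂ} {u v : V} (huv : G.Adj u v) (hu : f u = 0)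
    (hf : ∀ w, G.Adj u w → w ≠ v → f w = 0) :
    ‖f v‖ = √((G.degree v : ℝ) * G.degree u) * ‖nLap G f u‖ := by
  have hpos : 0 < √((G.degree v : ℝ) * G.degree u) := Real.sqrt_pos.2 <| by
    have := G.degree_pos_iff_exists_adj v |>.2 ⟨u, huv.symm⟩
    have := G.degree_pos_iff_exists_adj u |>.2 ⟨v, huv⟩
    positivity
  rw [nLap_eq_of_adj_of_eq_zero huv hu hf, norm_neg, norm_div, Complex.norm_real,
    Real.norm_of_nonneg hpos.le, mul_div_cancel₀ _ hpos.ne']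

end SimpleGraph

open SimpleGraph in
theorem lambda_set_of_private_neighbors {V : Type*} (G : SimpleGraph V) [G.LocallyFinite]
    (Λ : ℝ) (hΛ : 1 ≤ Λ) (hdegΛ : ∀ v : V, (G.degree v : ℝ) ≤ Λ)
    (S : Set V)
    (hS : ∀ v ∈ S, ∃ u : V, u ∉ S ∧ G.Adj v u ∧ ∀ w : V, G.Adj u w → w ∈ S → w = v)
    (φ : V → ℂ) (hsupp : ∀ v, v ∉ S → φ v = 0)
    (hsum2 : Summable fun v => ‖nLap G φ v‖ ^ 2) :
    Real.sqrt (∑' v, ‖φ v‖ ^ 2) ≤ Λ * Real.sqrt (∑' v, ‖nLap G φ v‖ ^ 2) := by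
  choose u hu_notMem hu_adj hu_private using hS
  have hΛ₀ : 0 ≤ Λ := zero_le_one.trans hΛ
  have hinj : Injective fun v : S => u v v.2 := fun v₁ v₂ (h : u v₁ v₁.2 = u v₂ v₂.2) =>
    Subtype.ext (hu_private v₁ v₁.2 v₂ (h ▸ (hu_adj v₂ v₂.2).symm) v₂.2).symm
  refine sqrt_tsum_sq_le_of_injective hsupp hsum2 hinj hΛ₀ fun ⟨v, hv⟩ => ?_
  have hvanish : ∀ w, G.Adj (u v hv) w → w ≠ v → φ w = 0 := fun w hw hwv =>
    hsupp w fun hwS => hwv (hu_private v hv w hw hwS)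
  rw [norm_eq_sqrt_mul_norm_nLap (hu_adj v hv).symm (hsupp _ (hu_notMem v hv)) hvanish]
  gcongr
  rw [Real.sqrt_le_left hΛ₀, sq]
  exact mul_le_mul (hdegΛ v) (hdegΛ _) (by positivity) hΛ₀
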